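/- arXiv:0801.4114 — 3 statements merged into one kernel-verified Lean document; each statement's English description precedes it below -/
import Mathlib

section
/- For any word Q in simple reflections of a Coxeter group W and any subword P of Q, the Demazure product of P is less than or equal to the Demazure product of Q in Bruhat order. -/
variable {B W : Type*} [DecidableEq B] [Group W] {M : CoxeterMatrix B} (cs : CoxeterSystem M W)

/-- The Bruhat order on a Coxeter group, via the subword property:
`u ≤ v` iff every reduced word for `v` contains a subword that is a reduced word for `u`. -/
def BruhatLe (u v : W) : Prop :=
  ∀ Q : List B, cs.IsReduced Q → cs.wordProd Q = v →
    ∃ P : List B, P.Sublist Q ∧ cs.IsReduced P ∧ cs.wordProd P = u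

/-- The Demazure product of a word in the simple reflections: multiply the letters in
order, omitting any letter that would decrease the length. -/
noncomputable def Dem (Q : List B) : W :=
  Q.foldl (fun w b => if cs.length w < cs.length (w * cs.simple b) then w * cs.simple b else w) 1

/-- The subword of `Q` obtained by deleting the letters at the positions in `F`
(positions are `0`-indexed); this is the complementary subword `Q ∖ F`. -/
def dmask (Q : List B) (F : Finset ℕ) : List B :=
  ((Q.zipIdx.map Prod.swap).filter fun p => p.1 ∉ F).map Prod.snd

/-- The subword of `Q` consisting of the letters at the positions in `F` (in order). -/
def smask (Q : List B) (F : Finset ℕ) : List B :=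
  ((Q.zipIdx.map Prod.swap).filter fun p => p.1 ∈ F).map Prod.snd

/-- `F` is a face of the subword complex `Δ(Q,w)`: `F` is a set of positions of `Q` such
that the complementary subword `Q ∖ F` contains a reduced word for `w`. -/
def IsFace (Q : List B) (w : W) (F : Finset ℕ) : Prop :=
  F ⊆ Finset.range Q.length ∧
    ∃ P : List B, P.Sublist (dmask Q F) ∧ cs.IsReduced P ∧ cs.wordProd P = w

/-- `F` is a facet (maximal face) of the subword complex `Δ(Q,w)`. -/
def IsFacet (Q : List B) (w : W) (F : Finset ℕ) : Prop :=
  IsFace cs Q w F ∧ ∀ F' : Finset ℕ, IsFace cs Q w F' → F ⊆ F' → F' = F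

/-!
Appending a letter `i` to a word replaces its Demazure product `w` by the longer of `w` and
`w * s i`. With the Bruhat order described by chains `u < t * u` (`t` a reflection,
`ℓ u < ℓ (t * u)`), monotonicity under subwords follows by induction on `Q` from Deodhar's lifting
property: if `u ≤ v` then `u * s i ≤ v` or `u * s i ≤ v * s i`.

The lifting property, and the passage from chains to reduced subwords, rest on the strong exchange
property: if `ℓ (t * π ω) < ℓ (π ω)` then `t` occurs in the left inversion sequence of `ω`. As in
Björner–Brenti this comes from a permutation representation of `W` on `W × ZMod 2`, through which a
word `ω` records the parity of the number of occurrences of each reflection in its left inversion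
sequence. That parity thus depends only on `π ω`; a reflection `t` flips its own parity, and for a
reduced word `β` of `t * π ω` the parity of `t` is `0`, since `t` is not a left inversion of `π β`.
-/

namespace CoxeterSystem

omit [DecidableEq B]

open scoped Classical

local prefix:100 "s " => cs.simple
local prefix:100 "π " => cs.wordProd
local prefix:100 "ℓ " => cs.length
local prefix:100 "lis " => cs.leftInvSeq

theorem prod_map_alternatingWord_two_mul {G : Type*} [Monoid G] (f : B → G) (i j : B) (p : ℕ) :
    ((alternatingWord i j (2 * p)).map f).prod = (f i * f j) ^ p := by
  induction p with
  | zero => simp [alternatingWord]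
  | succ p ih =>
    rw [show 2 * (p + 1) = 2 * p + 1 + 1 by ring, alternatingWord_succ', alternatingWord_succ']
    simp [ih, pow_succ', mul_assoc]

theorem leftInvSeq_alternatingWord_two_mul (i j : B) (p : ℕ) :
    lis (alternatingWord i j (2 * p)) =
      (List.range (2 * p)).map fun k => s i * (s j * s i) ^ k := by
  refine List.ext_getElem (by simp) fun k hk _ => ?_
  rw [getElem_leftInvSeq_alternatingWord cs i j p k (by simpa using hk), List.getElem_map,
    List.getElem_range, prod_alternatingWord_eq_mul_pow]
  simp [Nat.mul_add_div]

theorem even_count_leftInvSeq_alternatingWord (i j : B) (x : W) :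
    Even ((lis (alternatingWord i j (2 * M i j))).count x) := by
  have hperiodic : ((fun k => s i * (s j * s i) ^ k) ∘ fun k => M i j + k) =
      fun k => s i * (s j * s i) ^ k := by
    funext k
    simp [pow_add, simple_mul_simple_pow']
  rw [leftInvSeq_alternatingWord_two_mul, two_mul, List.range_add, List.map_append, List.map_map,
    hperiodic, List.count_append]
  exact ⟨_, rfl⟩

theorem conj_simple_eq_simple_iff (i : B) (x : W) : MulAut.conj (s i) x = s i ↔ x = s i := by
  rw [← MulEquiv.eq_symm_apply, MulAut.conj_symm_apply, inv_simple, simple_mul_simple_self,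
    one_mul]

-- Björner–Brenti's `π_s`, extended from reflections to all of `W`, with signs written in `ZMod 2`.
noncomputable def signPerm (i : B) : Equiv.Perm (W × ZMod 2) :=
  Function.Involutive.toPerm
    (fun p => (MulAut.conj (s i) p.1, p.2 + if p.1 = s i then 1 else 0)) <| by
    rintro ⟨x, e⟩
    ext
    · simp [mul_assoc]
    · dsimp only
      rw [if_congr (cs.conj_simple_eq_simple_iff i x) rfl rfl, add_assoc,
        CharTwo.add_self_eq_zero, add_zero]

theorem signPerm_apply (i : B) (x : W) (e : ZMod 2) :
    cs.signPerm i (x, e) = (MulAut.conj (s i) x, e + if x = s i then 1 else 0) :=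
  rfl

theorem prod_map_signPerm_apply (ω : List B) (x : W) (e : ZMod 2) :
    (ω.map cs.signPerm).prod (x, e) =
      (MulAut.conj (π ω) x, e + (lis ω).count (MulAut.conj (π ω) x)) := by
  induction ω with
  | nil => simp
  | cons i ω ih =>
    rw [List.map_cons, List.prod_cons, Equiv.Perm.mul_apply, ih, signPerm_apply, wordProd_cons,
      map_mul, MulAut.mul_apply, leftInvSeq, List.count_cons,
      List.count_map_of_injective _ _ (MulAut.conj (s i)).injective]
    have hfix : (s i == MulAut.conj (s i) (MulAut.conj (π ω) x)) = true ↔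
        MulAut.conj (π ω) x = s i := by
      rw [beq_iff_eq, eq_comm, conj_simple_eq_simple_iff]
    rw [if_congr hfix rfl rfl]
    ext
    · rfl
    · push_cast
      ring

theorem isLiftable_signPerm : M.IsLiftable cs.signPerm := by
  intro i j
  refine Equiv.ext fun ⟨x, e⟩ => ?_
  have hbraid : π (alternatingWord i j (2 * M i j)) = 1 := by
    rw [wordProd, prod_map_alternatingWord_two_mul, simple_mul_simple_pow]
  rw [← prod_map_alternatingWord_two_mul, prod_map_signPerm_apply, hbraid, map_one,
    MulAut.one_apply, ZMod.natCast_eq_zero_iff_even.mpr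
      (cs.even_count_leftInvSeq_alternatingWord i j x), add_zero, Equiv.Perm.one_apply]

noncomputable def signRep : W →* Equiv.Perm (W × ZMod 2) :=
  cs.lift ⟨cs.signPerm, cs.isLiftable_signPerm⟩

theorem signRep_simple (i : B) : cs.signRep (s i) = cs.signPerm i :=
  cs.lift_apply_simple _ i

theorem signRep_wordProd_apply (ω : List B) (x : W) (e : ZMod 2) :
    cs.signRep (π ω) (x, e) =
      (MulAut.conj (π ω) x, e + (lis ω).count (MulAut.conj (π ω) x)) := by
  have hprod : cs.signRep (π ω) = (ω.map cs.signPerm).prod := by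
    rw [wordProd, map_list_prod, List.map_map]
    exact congrArg (fun f => (ω.map f).prod) (funext cs.signRep_simple)
  rw [hprod, prod_map_signPerm_apply]

theorem signRep_apply_fst (w x : W) (e : ZMod 2) :
    (cs.signRep w (x, e)).1 = MulAut.conj w x := by
  obtain ⟨ω, -, rfl⟩ := cs.exists_isReduced w
  rw [signRep_wordProd_apply]

theorem signRep_apply_add (w x : W) (e a : ZMod 2) :
    cs.signRep w (x, e + a) = ((cs.signRep w (x, e)).1, (cs.signRep w (x, e)).2 + a) := by
  obtain ⟨ω, -, rfl⟩ := cs.exists_isReduced w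
  simp only [signRep_wordProd_apply, Prod.mk.injEq, true_and]
  ring

theorem signRep_apply_self_of_isReflection {t : W} (ht : cs.IsReflection t) (e : ZMod 2) :
    cs.signRep t (t, e) = (t, e + 1) := by
  obtain ⟨w, i, rfl⟩ := ht
  obtain ⟨c, hc⟩ : ∃ c, cs.signRep w⁻¹ (w * s i * w⁻¹, e) = (s i, c) :=
    ⟨_, Prod.ext (by rw [signRep_apply_fst]; simp [mul_assoc]) rfl⟩
  have hw : cs.signRep w (s i, c) = (w * s i * w⁻¹, e) := by
    rw [← hc, ← Equiv.Perm.mul_apply, ← map_mul, mul_inv_cancel, map_one, Equiv.Perm.one_apply]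
  calc cs.signRep (w * s i * w⁻¹) (w * s i * w⁻¹, e)
      = cs.signRep w (cs.signRep (s i) (s i, c)) := by
        rw [map_mul, map_mul, Equiv.Perm.mul_apply, Equiv.Perm.mul_apply, hc]
    _ = cs.signRep w (s i, c + 1) := by simp [signRep_simple, signPerm_apply]
    _ = (w * s i * w⁻¹, e + 1) := by rw [signRep_apply_add, hw]

theorem mem_leftInvSeq_of_length_mul_lt {t : W} (ht : cs.IsReflection t) {ω : List B}
    (h : ℓ (t * π ω) < ℓ (π ω)) : t ∈ lis ω := by
  obtain ⟨β, hβ, hβω⟩ := cs.exists_isReduced (t * π ω)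
  have hωβ : π ω = t * π β := by rw [← hβω, ← mul_assoc, ht.mul_self, one_mul]
  have hβt : t ∉ lis β := fun hmem => by
    have hinv := (cs.isLeftInversion_of_mem_leftInvSeq hβ hmem).2
    rw [← hωβ, ← hβω] at hinv
    exact lt_asymm h hinv
  set y := MulAut.conj (π ω)⁻¹ t
  have hyω : MulAut.conj (π ω) y = t := by simp [y, mul_assoc]
  have hyβ : MulAut.conj (π β) y = t := by
    simp [y, ← hβω, mul_assoc, ht.mul_self, ht.inv]
  have hcount : ((lis ω).count t : ZMod 2) = 1 :=
    calc ((lis ω).count t : ZMod 2)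
        = (cs.signRep (π ω) (y, 0)).2 := by rw [signRep_wordProd_apply, hyω, zero_add]
      _ = (cs.signRep t (cs.signRep (π β) (y, 0))).2 := by rw [hωβ, map_mul]; rfl
      _ = (cs.signRep t (t, 0)).2 := by
        rw [signRep_wordProd_apply, hyβ, List.count_eq_zero_of_not_mem hβt, Nat.cast_zero,
          add_zero]
      _ = 1 := by rw [signRep_apply_self_of_isReflection cs ht, zero_add]
  refine List.count_pos_iff.mp (Nat.pos_of_ne_zero fun h0 => ?_)
  rw [h0, Nat.cast_zero] at hcount
  exact zero_ne_one hcount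

theorem exists_wordProd_eraseIdx_eq_mul {t : W} (ht : cs.IsReflection t) {ω : List B}
    (h : ℓ (t * π ω) < ℓ (π ω)) : ∃ k < ω.length, π (ω.eraseIdx k) = t * π ω := by
  obtain ⟨k, hk, hkt⟩ := List.mem_iff_getElem.mp (cs.mem_leftInvSeq_of_length_mul_lt ht h)
  refine ⟨k, by simpa using hk, ?_⟩
  rw [← getD_leftInvSeq_mul_wordProd, List.getD_eq_getElem _ _ hk, hkt]

theorem exists_sublist_isReduced_wordProd_eq (ω : List B) :
    ∃ P, P.Sublist ω ∧ cs.IsReduced P ∧ π P = π ω := by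
  induction ω with
  | nil => exact ⟨[], .slnil, by simp [IsReduced], rfl⟩
  | cons i ω ih =>
    obtain ⟨P, hPω, hP, hπ⟩ := ih
    rcases cs.length_simple_mul (π P) i with hup | hdown
    · refine ⟨i :: P, hPω.cons_cons i, ?_, by rw [wordProd_cons, wordProd_cons, hπ]⟩
      rw [IsReduced, wordProd_cons, hup, hP.eq, List.length_cons]
    · obtain ⟨k, hk, hkP⟩ := cs.exists_wordProd_eraseIdx_eq_mul (cs.isReflection_simple i)
        (by omega : ℓ (s i * π P) < ℓ (π P))
      refine ⟨P.eraseIdx k, ((P.eraseIdx_sublist k).trans hPω).trans (List.sublist_cons_self i ω),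
        ?_, by rw [hkP, hπ, wordProd_cons]⟩
      rw [IsReduced, hkP, List.length_eraseIdx_of_lt hk, ← hP.eq]
      omega

def BruhatChainLe : W → W → Prop :=
  Relation.ReflTransGen fun u v => ∃ t, cs.IsReflection t ∧ v = t * u ∧ ℓ u < ℓ v

theorem bruhatChainLe_reflection_mul {t u : W} (ht : cs.IsReflection t) (h : ℓ u < ℓ (t * u)) :
    cs.BruhatChainLe u (t * u) :=
  .single ⟨t, ht, rfl, h⟩

theorem bruhatChainLe_self_mul_simple {w : W} {i : B} (h : ℓ w < ℓ (w * s i)) :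
    cs.BruhatChainLe w (w * s i) := by
  have hw : w * s i = (w * s i * w⁻¹) * w := by group
  rw [hw] at h ⊢
  exact cs.bruhatChainLe_reflection_mul ((cs.isReflection_simple i).conj w) h

theorem mul_simple_bruhatChainLe_self {w : W} {i : B} (h : ℓ (w * s i) < ℓ w) :
    cs.BruhatChainLe (w * s i) w := by
  simpa using cs.bruhatChainLe_self_mul_simple (w := w * s i) (i := i) (by simpa using h)

theorem bruhatLe_of_bruhatChainLe {u v : W} (h : cs.BruhatChainLe u v) : BruhatLe cs u v := by
  induction h with
  | refl => exact fun R hR hRu => ⟨R, .refl R, hR, hRu⟩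
  | @tail a _ _ hstep ih =>
    obtain ⟨t, ht, rfl, hlt⟩ := hstep
    intro R hR hRv
    have hcancel : t * π R = a := by rw [hRv, ← mul_assoc, ht.mul_self, one_mul]
    obtain ⟨k, -, hk⟩ := cs.exists_wordProd_eraseIdx_eq_mul ht (ω := R) (by rwa [hcancel, hRv])
    obtain ⟨P', hP'R, hP', hπP'⟩ := cs.exists_sublist_isReduced_wordProd_eq (R.eraseIdx k)
    obtain ⟨P, hPP', hP, hπP⟩ := ih P' hP' (by rw [hπP', hk, hcancel])
    exact ⟨P, hPP'.trans (hP'R.trans (R.eraseIdx_sublist k)), hP, hπP⟩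

theorem mul_simple_eq_or_length_lt {t z : W} (ht : cs.IsReflection t) (hz : ℓ z < ℓ (t * z))
    (i : B) :
    z * s i = t * z ∨ ℓ (z * s i) < ℓ (t * z * s i) := by
  obtain ⟨S, hS, hSπ⟩ := cs.exists_isReduced (t * z * s i)
  have hSi : π (S ++ [i]) = t * z := by
    rw [wordProd_append, wordProd_singleton, ← hSπ, simple_mul_simple_cancel_right]
  obtain ⟨k, hk, hkz⟩ := cs.exists_wordProd_eraseIdx_eq_mul ht (ω := S ++ [i])
    (by rwa [hSi, ← mul_assoc, ht.mul_self, one_mul])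
  rw [hSi, ← mul_assoc, ht.mul_self, one_mul] at hkz
  rcases lt_or_ge k S.length with hkS | hkS
  · right
    rw [List.eraseIdx_append_of_lt_length hkS, wordProd_append, wordProd_singleton] at hkz
    calc ℓ (z * s i) = ℓ (π (S.eraseIdx k)) := by rw [← hkz, simple_mul_simple_cancel_right]
      _ ≤ (S.eraseIdx k).length := cs.length_wordProd_le _
      _ < S.length := by rw [List.length_eraseIdx_of_lt hkS]; omega
      _ = ℓ (t * z * s i) := by rw [hSπ, hS.eq]
  · left
    have hkS' : k = S.length := by simp at hk; omega
    rw [hkS', List.eraseIdx_append_of_length_le le_rfl, Nat.sub_self, List.eraseIdx_cons_zero,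
      List.append_nil] at hkz
    rw [← cs.simple_mul_simple_cancel_right (w := t * z) i, hSπ, hkz]

variable {cs} in
theorem BruhatChainLe.mul_simple {u v : W} (h : cs.BruhatChainLe u v) (i : B) :
    cs.BruhatChainLe (u * s i) v ∨ cs.BruhatChainLe (u * s i) (v * s i) := by
  induction h with
  | refl => exact .inr .refl
  | tail _ hstep ih =>
    obtain ⟨t, ht, rfl, hlt⟩ := hstep
    rcases ih with hu | hu
    · exact .inl (hu.tail ⟨t, ht, rfl, hlt⟩)
    · rcases cs.mul_simple_eq_or_length_lt ht hlt i with heq | hlt'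
      · exact .inl (heq ▸ hu)
      · exact .inr (hu.tail ⟨t, ht, mul_assoc .., hlt'⟩)

-- The Demazure product `w ⋆ s i`.
noncomputable def demMul (w : W) (i : B) : W :=
  if ℓ w < ℓ (w * s i) then w * s i else w

theorem dem_append_singleton (ω : List B) (i : B) :
    Dem cs (ω ++ [i]) = cs.demMul (Dem cs ω) i := by
  rw [Dem, List.foldl_append]
  rfl

theorem bruhatChainLe_self_demMul (w : W) (i : B) : cs.BruhatChainLe w (cs.demMul w i) := by
  unfold demMul
  split_ifs with h
  · exact cs.bruhatChainLe_self_mul_simple h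
  · exact .refl

theorem mul_simple_bruhatChainLe_demMul (w : W) (i : B) :
    cs.BruhatChainLe (w * s i) (cs.demMul w i) := by
  unfold demMul
  split_ifs with h
  · exact .refl
  · exact cs.mul_simple_bruhatChainLe_self (by have := cs.length_mul_simple_ne w i; omega)

variable {cs} in
theorem BruhatChainLe.demMul {u v : W} (h : cs.BruhatChainLe u v) (i : B) :
    cs.BruhatChainLe (cs.demMul u i) (cs.demMul v i) := by
  by_cases hu : ℓ u < ℓ (u * s i)
  · rw [CoxeterSystem.demMul, if_pos hu]
    rcases h.mul_simple i with h' | h'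
    · exact h'.trans (cs.bruhatChainLe_self_demMul v i)
    · exact h'.trans (cs.mul_simple_bruhatChainLe_demMul v i)
  · rw [CoxeterSystem.demMul, if_neg hu]
    exact h.trans (cs.bruhatChainLe_self_demMul v i)

theorem bruhatChainLe_dem_of_sublist {P Q : List B} (h : P.Sublist Q) :
    cs.BruhatChainLe (Dem cs P) (Dem cs Q) := by
  induction Q using List.reverseRecOn generalizing P with
  | nil => rw [List.sublist_nil.mp h]; exact .refl
  | append_singleton Q i ih =>
    obtain ⟨P₁, P₂, rfl, hP₁, hP₂⟩ := List.sublist_append_iff.mp h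
    rw [dem_append_singleton]
    rcases List.sublist_singleton.mp hP₂ with rfl | rfl
    · rw [List.append_nil]
      exact (ih hP₁).trans (cs.bruhatChainLe_self_demMul _ i)
    · rw [dem_append_singleton]
      exact (ih hP₁).demMul i

end CoxeterSystem

/-- The Demazure product is monotone with respect to taking subwords:
if `P` is a subword of `Q` then `Dem P ≤ Dem Q` in Bruhat order. -/
theorem dem_mono_sublist (P Q : List B) (h : P.Sublist Q) :
    BruhatLe cs (Dem cs P) (Dem cs Q) :=
  cs.bruhatLe_of_bruhatChainLe (cs.bruhatChainLe_dem_of_sublist h)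
end

section
/- For a reduced word Q for v and w ≤ v, the facets (maximal faces) of the subword complex Δ(Q,w) are exactly the complements of subwords of Q that are reduced words for w; consequently every facet has cardinality ℓ(v) − ℓ(w), so Δ(Q,w) is a pure simplicial complex. -/
/-!
Every subword of `Q ∖ F` is of the form `Q ∖ G` with `G ⊇ F` (delete the positions the subword
skips), so if `F` is a facet then `Q ∖ F` itself must be a reduced word for `w`. Conversely, if
`Q ∖ F` is a reduced word for `w`, then for any face `F' ⊇ F` the word `Q ∖ F'` contains a word
for `w` and so has length at least `ℓ(w) = |Q ∖ F|`, which forces `F' = F`. Thus every facet has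
`|Q| - ℓ(w) = ℓ(v) - ℓ(w)` elements.
-/

variable {B W : Type*} [DecidableEq B] [Group W] {M : CoxeterMatrix B} (cs : CoxeterSystem M W)

theorem List.Sublist.filter_mem_map_eq {α β : Type*} [DecidableEq β] {f : α → β} {l' l : List α}
    (h : l'.Sublist l) (hl : (l.map f).Nodup) :
    l.filter (fun a => f a ∈ l'.map f) = l' := by
  have hinj := List.inj_on_of_nodup_map hl
  refine (hl.of_map f).perm_iff_eq_of_sublist List.filter_sublist h |>.mp ?_
  refine (List.perm_ext_iff_of_nodup ((hl.of_map f).sublist List.filter_sublist)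
    ((hl.of_map f).sublist h)).mpr fun a => ?_
  simp only [List.mem_filter, List.mem_map, decide_eq_true_eq]
  constructor
  · rintro ⟨ha, b, hb, hba⟩
    rwa [← hinj (h.subset hb) ha hba]
  · exact fun ha => ⟨h.subset ha, a, ha, rfl⟩

theorem map_fst_zipIdx_swap {α : Type*} (l : List α) :
    (l.zipIdx.map Prod.swap).map Prod.fst = List.range l.length := by
  rw [List.map_map]
  change l.zipIdx.map Prod.snd = _
  rw [List.zipIdx_map_snd, List.range_eq_range']

theorem length_dmask {α : Type*} (Q : List α) (F : Finset ℕ) :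
    (dmask Q F).length = (Finset.range Q.length \ F).card := by
  rw [dmask, List.length_map, ← List.length_map (f := Prod.fst)]
  change (((Q.zipIdx.map Prod.swap).filter ((fun i => decide (i ∉ F)) ∘ Prod.fst)).map
    Prod.fst).length = _
  rw [← List.filter_map, map_fst_zipIdx_swap, Finset.sdiff_eq_filter]
  rfl

theorem length_dmask_add_card {α : Type*} (Q : List α) {F : Finset ℕ}
    (hF : F ⊆ Finset.range Q.length) : (dmask Q F).length + F.card = Q.length := by
  rw [length_dmask, Finset.card_sdiff_add_card_eq_card hF, Finset.card_range]

theorem dmask_sublist_dmask {α : Type*} (Q : List α) {F F' : Finset ℕ} (h : F ⊆ F') :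
    (dmask Q F').Sublist (dmask Q F) :=
  (List.monotone_filter_right _ fun p hp => by
    simp only [decide_eq_true_eq] at hp ⊢
    exact fun hF => hp (h hF)).map _

theorem exists_dmask_eq_of_sublist_dmask {α : Type*} (Q : List α) {F : Finset ℕ}
    (hF : F ⊆ Finset.range Q.length) {P : List α} (hP : P.Sublist (dmask Q F)) :
    ∃ G : Finset ℕ, F ⊆ G ∧ G ⊆ Finset.range Q.length ∧ dmask Q G = P := by
  obtain ⟨E, hE, rfl⟩ := List.sublist_map_iff.mp hP
  have hEF : ∀ p ∈ E, p.1 ∉ F := fun p hp => by simpa using List.of_mem_filter (hE.subset hp)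
  let T := (E.map Prod.fst).toFinset
  refine ⟨Finset.range Q.length \ T, fun i hi => ?_, Finset.sdiff_subset, ?_⟩
  · refine Finset.mem_sdiff.mpr ⟨hF hi, fun hiT => ?_⟩
    obtain ⟨p, hp, rfl⟩ := List.mem_map.mp (List.mem_toFinset.mp hiT)
    exact hEF p hp hi
  · have hnd : ((Q.zipIdx.map Prod.swap).map Prod.fst).Nodup := by
      rw [map_fst_zipIdx_swap]; exact List.nodup_range
    rw [dmask, ← (hE.trans List.filter_sublist).filter_mem_map_eq hnd]
    congr 1
    refine List.filter_congr fun p hp => ?_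
    have hlt : p.1 ∈ List.range Q.length :=
      map_fst_zipIdx_swap Q ▸ List.mem_map_of_mem (f := Prod.fst) hp
    simp only [decide_not, T, Finset.mem_sdiff, Finset.mem_range, List.mem_toFinset]
    simp [List.mem_range.mp hlt]

theorem IsFace.length_le {B W : Type*} [Group W] {M : CoxeterMatrix B}
    {cs : CoxeterSystem M W} {Q : List B} {w : W} {F : Finset ℕ} (hF : IsFace cs Q w F) :
    cs.length w ≤ (dmask Q F).length := by
  obtain ⟨-, P, hP, hPred, rfl⟩ := hF
  exact hPred.eq ▸ hP.length_le

theorem IsFacet.isReduced_dmask {B W : Type*} [Group W] {M : CoxeterMatrix B}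
    {cs : CoxeterSystem M W} {Q : List B} {w : W} {F : Finset ℕ} (hF : IsFacet cs Q w F) :
    cs.IsReduced (dmask Q F) ∧ cs.wordProd (dmask Q F) = w := by
  obtain ⟨⟨hFr, P, hP, hPred, hPw⟩, hmax⟩ := hF
  obtain ⟨G, hFG, hGr, rfl⟩ := exists_dmask_eq_of_sublist_dmask Q hFr hP
  rw [← hmax G ⟨hGr, _, List.Sublist.refl _, hPred, hPw⟩ hFG]
  exact ⟨hPred, hPw⟩

theorem isFacet_of_isReduced_dmask {B W : Type*} [Group W] {M : CoxeterMatrix B}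
    {cs : CoxeterSystem M W} {Q : List B} {w : W} {F : Finset ℕ}
    (hF : F ⊆ Finset.range Q.length) (hred : cs.IsReduced (dmask Q F))
    (hw : cs.wordProd (dmask Q F) = w) : IsFacet cs Q w F := by
  refine ⟨⟨hF, _, List.Sublist.refl _, hred, hw⟩, fun F' hF' hFF' => ?_⟩
  have hlen : (dmask Q F).length ≤ (dmask Q F').length := by
    rw [← hred.eq, hw]; exact hF'.length_le
  have hF_add := length_dmask_add_card Q hF
  have hF'_add := length_dmask_add_card Q hF'.1
  exact (Finset.eq_of_subset_of_card_le hFF' (by omega)).symm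

theorem isFacet_iff {B W : Type*} [Group W] {M : CoxeterMatrix B}
    (cs : CoxeterSystem M W) {Q : List B} {w : W} {F : Finset ℕ} :
    IsFacet cs Q w F ↔
      F ⊆ Finset.range Q.length ∧ cs.IsReduced (dmask Q F) ∧ cs.wordProd (dmask Q F) = w :=
  ⟨fun hF => ⟨hF.1.1, hF.isReduced_dmask⟩,
    fun ⟨hF, hred, hw⟩ => isFacet_of_isReduced_dmask hF hred hw⟩

theorem IsFacet.card_eq {B W : Type*} [Group W] {M : CoxeterMatrix B}
    {cs : CoxeterSystem M W} {Q : List B} {w : W} {F : Finset ℕ} (hF : IsFacet cs Q w F) :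
    F.card = Q.length - cs.length w := by
  obtain ⟨hFr, hred, rfl⟩ := (isFacet_iff cs).mp hF
  have hF_add := length_dmask_add_card Q hFr
  rw [hred.eq]
  omega

theorem subword_complex_facets (Q : List B) (v w : W)
    (hred : cs.IsReduced Q) (hv : cs.wordProd Q = v) :
    (∀ F : Finset ℕ, IsFacet cs Q w F ↔
      (F ⊆ Finset.range Q.length ∧ cs.IsReduced (dmask Q F) ∧ cs.wordProd (dmask Q F) = w)) ∧
    (∀ F : Finset ℕ, IsFacet cs Q w F → F.card = cs.length v - cs.length w) := by
  have hlen : cs.length v = Q.length := hv ▸ hred.eq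
  exact ⟨fun F => isFacet_iff cs, fun F hF => hlen ▸ hF.card_eq⟩
end

section
/- With notation as in the C_i construction: the map C_{i-1} → C_i sending (w',S) to (w',S) if i ∉ S and to (w' r_α, S∖{i}) if i ∈ S (where r_α = q_i) is a well-defined surjection, and each fiber has one or two elements, according to: (1) if w' r_α > w', the fiber of (w',S) ∈ C_i is {(w',S)}; (2) if w' r_α < w' and w' ≰ v_{i-1}, the fiber is {(w' r_α, S∪{i})}; (3) if w' r_α < w' ≤ v_{i-1}, the fiber is {(w',S), (w' r_α, S∪{i})}. -/
variable {B W : Type*} [DecidableEq B] [Group W] {M : CoxeterMatrix B} (cs : CoxeterSystem M W)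

/-- The set `C_i` of pairs `(w', S)` with `w' ≤ Dem(q_1, …, q_i)`,
`S ⊆ {i, …, ℓ(v) - 1}` (`0`-indexed positions), `ℓ(w') + |S| = ℓ(w)` and `w' ⋅ ∏ S = w`,
where `∏ S` is the ordered product of the letters of `Q` at the positions in `S`. -/
def Cset (Q : List B) (w : W) (i : ℕ) : Set (W × Finset ℕ) :=
  {x | BruhatLe cs x.1 (Dem cs (Q.take i)) ∧ (∀ j ∈ x.2, i ≤ j ∧ j < Q.length) ∧
       cs.length x.1 + x.2.card = cs.length w ∧ x.1 * cs.wordProd (smask Q x.2) = w}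

/-!
If `i ∈ S` for `(w', S) ∈ C_{i-1}`, the length condition `ℓ(w') + |S| = ℓ(w)` forces
`w' r_α > w'`. Hence a preimage of `(w', S) ∈ C_i` is either `(w', S)` itself, which lies in
`C_{i-1}` iff `w' ≤ v_{i-1}`, or `(w' r_α, S ∪ {i})`, which lies in `C_{i-1}` iff `w' r_α < w'`.
Both reduce to the lifting property along the reduced word `v_i = v_{i-1} r_α`: for `u ≤ v_i`,
`u r_α > u` gives `u ≤ v_{i-1}` and `u r_α < u` gives `u r_α ≤ v_{i-1}`.

Since `BruhatLe` is the subword characterisation, quantified over all reduced words of `v`, this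
needs the subword property: a reduced subword of one reduced word gives a Bruhat chain, and a chain
gives a reduced subword of every reduced word. Both directions rest on the strong exchange
property, which comes from the reflection representation `s · (t, ε) = (s t s, ε + [t = s])`:
the parity of the number of occurrences of `t` in the left inversion sequence of a word depends
only on its product, and equals `1` for a word of `t` itself.
-/

open List Relation

section

variable {B W : Type*} [Group W] {M : CoxeterMatrix B} (cs : CoxeterSystem M W)

local prefix:100 "s" => cs.simple
local prefix:100 "π" => cs.wordProd
local prefix:100 "ℓ" => cs.length
local prefix:100 "lis" => cs.leftInvSeq

namespace CoxeterSystem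

theorem leftInvSeq_append (ω ω' : List B) :
    lis (ω ++ ω') = lis ω ++ (lis ω').map (MulAut.conj (π ω)) := by
  induction ω with
  | nil => simp
  | cons i ω ih => simp [leftInvSeq, ih, wordProd_cons, Function.comp_def]

theorem leftInvSeq_alternatingWord (i i' : B) :
    lis (alternatingWord i i' (2 * M i i')) =
      (range (M i i')).map (fun k => π (alternatingWord i' i (2 * k + 1))) ++
        (range (M i i')).map (fun k => π (alternatingWord i' i (2 * k + 1))) := by
  refine ext_getElem (by simp [two_mul]) fun k hk _ => ?_
  have hk' : k < 2 * M i i' := by simpa using hk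
  rw [getElem_leftInvSeq_alternatingWord cs i i' _ k hk', getElem_append]
  split_ifs with hkM
  · simp
  · obtain ⟨d, rfl⟩ := Nat.exists_eq_add_of_le (not_lt.mp (by simpa using hkM))
    simp [prod_alternatingWord_eq_mul_pow, Nat.add_div, pow_add]

section Count

variable [DecidableEq W]

theorem count_leftInvSeq_append (ω ω' : List B) (t : W) :
    (lis (ω ++ ω')).count t = (lis ω).count t + (lis ω').count ((π ω)⁻¹ * t * π ω) := by
  rw [leftInvSeq_append, count_append,
    ← count_map_of_injective _ _ (MulAut.conj (π ω)).injective ((π ω)⁻¹ * t * π ω)]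
  simp [mul_assoc]

def reflSign (i : B) : Function.End (W × ZMod 2) :=
  fun x => (s i * x.1 * s i, x.2 + if x.1 = s i then 1 else 0)

theorem prod_map_reflSign_apply (ω : List B) (t : W) (ε : ZMod 2) :
    (ω.map (reflSign cs)).prod (t, ε) =
      (π ω * t * (π ω)⁻¹, ε + (lis ω).count (π ω * t * (π ω)⁻¹)) := by
  induction ω with
  | nil => simp; rfl
  | cons i ω ih =>
    rw [map_cons, prod_cons, Function.End.mul_def]
    change reflSign cs i ((map (reflSign cs) ω).prod (t, ε)) = _
    set X := π ω * t * (π ω)⁻¹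
    have hY : π (i :: ω) * t * (π (i :: ω))⁻¹ = s i * X * s i := by
      simp [X, wordProd_cons, mul_assoc]
    rw [ih, hY, ← singleton_append (l := ω), count_leftInvSeq_append]
    simp [reflSign, mul_assoc, count_singleton, eq_comm (a := s i), mul_eq_one_iff_eq_inv,
      add_assoc, add_comm]

theorem reflSign_liftable : M.IsLiftable (reflSign cs) := by
  intro i i'
  have hpow : ∀ m : ℕ, (reflSign cs i * reflSign cs i') ^ m =
      ((alternatingWord i i' (2 * m)).map (reflSign cs)).prod := by
    intro m
    induction m with
    | zero => rfl
    | succ m ih =>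
      rw [pow_succ', ih, mul_add, mul_one, alternatingWord_succ', alternatingWord_succ']
      simp [mul_assoc]
  funext ⟨t, ε⟩
  have hone : π (alternatingWord i i' (2 * M i i')) = 1 := by
    simp [prod_alternatingWord_eq_mul_pow, simple_mul_simple_pow]
  rw [hpow, prod_map_reflSign_apply, hone, leftInvSeq_alternatingWord, count_append]
  simp [CharTwo.add_self_eq_zero]
  rfl

theorem count_leftInvSeq_eq_of_wordProd_eq {ω ω' : List B} (h : π ω = π ω') (t : W) :
    ((lis ω).count t : ZMod 2) = (lis ω').count t := by
  have hlift : ∀ υ : List B,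
      cs.lift ⟨_, reflSign_liftable cs⟩ (π υ) = (υ.map (reflSign cs)).prod := by
    intro υ
    simp [wordProd, map_list_prod, Function.comp_def]
  have := congrArg (fun g : Function.End (W × ZMod 2) => g ((π ω)⁻¹ * t * π ω, 0))
    (congrArg (cs.lift ⟨_, reflSign_liftable cs⟩) h)
  rw [hlift, hlift, prod_map_reflSign_apply, prod_map_reflSign_apply, ← h] at this
  simpa [mul_assoc] using congrArg Prod.snd this

theorem count_leftInvSeq_of_isReflection {t : W} (ht : cs.IsReflection t) {τ : List B}
    (hτ : π τ = t) : ((lis τ).count t : ZMod 2) = 1 := by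
  obtain ⟨u, i, rfl⟩ := ht
  obtain ⟨μ, rfl⟩ := cs.wordProd_surjective u
  have hpal : π (μ ++ [i] ++ μ.reverse) = π μ * s i * (π μ)⁻¹ := by
    simp [wordProd_append, wordProd_cons, mul_assoc]
  have hcancel := count_leftInvSeq_eq_of_wordProd_eq cs (ω := μ ++ μ.reverse) (ω' := [])
    (by simp [wordProd_append]) (π μ * s i * (π μ)⁻¹)
  rw [count_leftInvSeq_eq_of_wordProd_eq cs (hτ.trans hpal.symm), count_leftInvSeq_append,
    count_leftInvSeq_append]
  rw [count_leftInvSeq_append] at hcancel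
  simp [wordProd_append, mul_assoc] at hcancel ⊢
  linear_combination hcancel

end Count

section

variable {cs}

theorem IsLeftInversion.mem_leftInvSeq {ω : List B} {t : W} (h : cs.IsLeftInversion (π ω) t) :
    t ∈ lis ω := by
  classical
  obtain ⟨ht, hlt⟩ := h
  obtain ⟨ρ, hρ, hρω⟩ := cs.exists_isReduced (t * π ω)
  obtain ⟨τ, hτ⟩ := cs.wordProd_surjective t
  have hτρ : π (τ ++ ρ) = π ω := by
    rw [wordProd_append, hτ, ← hρω, ← mul_assoc, ht.mul_self, one_mul]
  have hρt : t ∉ lis ρ := fun hmem => by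
    have := (cs.isLeftInversion_of_mem_leftInvSeq hρ hmem).2
    rw [← hρω, ← mul_assoc, ht.mul_self, one_mul] at this
    omega
  by_contra hω
  have hparity := count_leftInvSeq_eq_of_wordProd_eq cs hτρ t
  rw [count_leftInvSeq_append, Nat.cast_add, count_leftInvSeq_of_isReflection cs ht hτ, hτ, ht.inv,
    ht.mul_self, one_mul, count_eq_zero.mpr hρt, count_eq_zero.mpr hω] at hparity
  simp at hparity

theorem IsLeftInversion.exists_sublist_wordProd_eq {ω : List B} {t : W}
    (h : cs.IsLeftInversion (π ω) t) :
    ∃ ω', ω' <+ ω ∧ ω'.length + 1 = ω.length ∧ t * π ω = π ω' := by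
  obtain ⟨j, hj, rfl⟩ := mem_iff_getElem.mp h.mem_leftInvSeq
  have hj' : j < ω.length := by simpa using hj
  refine ⟨ω.eraseIdx j, eraseIdx_sublist _ _, length_eraseIdx_add_one hj', ?_⟩
  rw [← getD_eq_getElem _ 1 hj, getD_leftInvSeq_mul_wordProd]

theorem IsRightInversion.exists_sublist_wordProd_eq {ω : List B} {t : W}
    (h : cs.IsRightInversion (π ω) t) :
    ∃ ω', ω' <+ ω ∧ ω'.length + 1 = ω.length ∧ π ω * t = π ω' := by
  have hrev : cs.IsLeftInversion (π ω.reverse) t := by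
    rw [wordProd_reverse, ← isRightInversion_inv_iff, inv_inv]
    exact h
  obtain ⟨ω', hsub, hlen, hπ⟩ := hrev.exists_sublist_wordProd_eq
  refine ⟨ω'.reverse, reverse_sublist.mp (by simpa using hsub), by simpa using hlen, ?_⟩
  rw [wordProd_reverse, ← hπ, wordProd_reverse, mul_inv_rev, inv_inv, h.1.inv]

theorem IsReduced.append_singleton {ω : List B} {i : B} (hω : cs.IsReduced ω)
    (hlt : ℓ (π ω) < ℓ (π ω * s i)) : cs.IsReduced (ω ++ [i]) := by
  have := cs.length_mul_simple (π ω) i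
  rw [IsReduced, wordProd_append, wordProd_singleton, length_append, length_singleton, ← hω.eq]
  omega

theorem IsReduced.length_lt_length_mul_simple {R : List B} {i : B}
    (h : cs.IsReduced (R ++ [i])) : ℓ (π R) < ℓ (π R * s i) := by
  have := h.eq
  have := cs.length_wordProd_le R
  simp only [wordProd_append, wordProd_singleton, length_append, length_singleton] at *
  omega

end

theorem exists_reduced_sublist (ω : List B) :
    ∃ ω', ω' <+ ω ∧ cs.IsReduced ω' ∧ π ω' = π ω := by
  induction ω with
  | nil => exact ⟨[], Sublist.refl _, by simp [IsReduced], rfl⟩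
  | cons c ω ih =>
    obtain ⟨ρ, hρω, hρ, hρπ⟩ := ih
    rcases cs.length_simple_mul (π ρ) c with hup | hdown
    · refine ⟨c :: ρ, hρω.cons_cons c, ?_, by rw [wordProd_cons, wordProd_cons, hρπ]⟩
      rw [IsReduced, wordProd_cons, hup, hρ.eq, length_cons]
    · obtain ⟨ρ', hρ'ρ, hlen, hπ⟩ :=
        IsLeftInversion.exists_sublist_wordProd_eq (cs := cs) (ω := ρ)
          ⟨cs.isReflection_simple c, by omega⟩
      refine ⟨ρ', (hρ'ρ.trans hρω).cons c, ?_, by rw [wordProd_cons, ← hρπ, hπ]⟩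
      rw [IsReduced, ← hπ]
      have := hρ.eq
      omega

def BruhatStep (x y : W) : Prop :=
  ∃ t, cs.IsReflection t ∧ y = t * x ∧ ℓ x < ℓ y

/- Exchanging `t` in the word `s i * (s i * t * z)` of `t * z` cannot delete a later letter, as
that would make `s i * z` shorter than `z`; so it deletes the leading `s i`, whence `t = s i`. -/
theorem simple_mul_eq_of_bruhatStep {i : B} {y z : W} (h : cs.BruhatStep z y)
    (hlt : ℓ (s i * y) < ℓ (s i * z)) : s i * z = y := by
  obtain ⟨t, ht, rfl, hzy⟩ := h
  have h₁ := cs.length_simple_mul z i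
  have h₂ := cs.length_simple_mul (t * z) i
  obtain ⟨ρ, hρ, hρπ⟩ := cs.exists_isReduced (s i * (t * z))
  have hiρ : π (i :: ρ) = t * z := by rw [wordProd_cons, ← hρπ, simple_mul_simple_cancel_left]
  have htz : t * (t * z) = z := by rw [← mul_assoc, ht.mul_self, one_mul]
  obtain ⟨ω', hsub, hlen, hπ⟩ := IsLeftInversion.exists_sublist_wordProd_eq (cs := cs)
    (ω := i :: ρ) ⟨ht, by rw [hiρ, htz]; exact hzy⟩
  rw [hiρ, htz] at hπ
  rcases sublist_cons_iff.mp hsub with hρ' | ⟨r, rfl, -⟩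
  · rw [hρ'.eq_of_length (by simpa using hlen)] at hπ
    calc s i * z = s i * (s i * (t * z)) := by rw [hρπ, ← hπ]
      _ = t * z := simple_mul_simple_cancel_left ..
  · have hr := cs.length_wordProd_le r
    rw [wordProd_cons] at hπ
    rw [← simple_mul_simple_cancel_left cs (w := π r) i, ← hπ] at hr
    have := hρ.eq
    rw [← hρπ] at this
    simp only [length_cons] at hlen
    omega

theorem reflTransGen_bruhatStep_simple_mul {x y : W} (h : ReflTransGen cs.BruhatStep x y)
    (i : B) :
    ReflTransGen cs.BruhatStep (s i * x) y ∨ ReflTransGen cs.BruhatStep (s i * x) (s i * y) := by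
  induction h with
  | refl => exact Or.inr .refl
  | @tail z y _ hzy ih =>
    rcases ih with h | h
    · exact Or.inl (h.tail hzy)
    obtain ⟨t, ht, rfl, -⟩ := id hzy
    have hconj := ht.conj (s i)
    rw [inv_simple] at hconj
    have hsts : s i * (t * z) = s i * t * s i * (s i * z) := by
      simp [mul_assoc]
    rcases lt_or_gt_of_ne (hsts ▸ hconj.length_mul_right_ne (s i * z)) with hlt | hlt
    · exact Or.inl (simple_mul_eq_of_bruhatStep cs hzy hlt ▸ h)
    · exact Or.inr (h.tail ⟨_, hconj, hsts, hlt⟩)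

theorem reflTransGen_bruhatStep_of_sublist {P R : List B} (hPR : P <+ R) (hP : cs.IsReduced P)
    (hR : cs.IsReduced R) : ReflTransGen cs.BruhatStep (π P) (π R) := by
  induction R generalizing P with
  | nil => rw [sublist_nil.mp hPR]
  | cons c R ih =>
    have hR' : cs.IsReduced R := by simpa using hR.drop 1
    have hstep : cs.BruhatStep (π R) (π (c :: R)) := by
      refine ⟨s c, cs.isReflection_simple c, wordProd_cons .., ?_⟩
      rw [hR.eq, hR'.eq, length_cons]
      omega
    rcases sublist_cons_iff.mp hPR with hPR | ⟨P, rfl, hPR₁⟩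
    · exact (ih hPR hP hR').tail hstep
    rcases reflTransGen_bruhatStep_simple_mul cs (ih hPR₁ (by simpa using hP.drop 1) hR') c
      with h | h
    · rw [wordProd_cons]
      exact h.tail hstep
    · rwa [wordProd_cons, wordProd_cons]

theorem exists_reduced_sublist_of_reflTransGen {x y : W} (h : ReflTransGen cs.BruhatStep x y)
    {R : List B} (hR : cs.IsReduced R) (hRy : π R = y) :
    ∃ P, P <+ R ∧ cs.IsReduced P ∧ π P = x := by
  induction h generalizing R with
  | refl => exact ⟨R, Sublist.refl _, hR, hRy⟩
  | tail _ hzy ih =>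
    obtain ⟨t, ht, rfl, hlt⟩ := hzy
    obtain ⟨R', hR'R, -, hπ⟩ := IsLeftInversion.exists_sublist_wordProd_eq (cs := cs) (ω := R)
      ⟨ht, by rwa [hRy, ← mul_assoc, ht.mul_self, one_mul]⟩
    obtain ⟨R'', hR''R', hR'', hπ'⟩ := cs.exists_reduced_sublist R'
    obtain ⟨P, hPR'', hP, rfl⟩ :=
      ih hR'' (by rw [hπ', ← hπ, hRy, ← mul_assoc, ht.mul_self, one_mul])
    exact ⟨P, hPR''.trans (hR''R'.trans hR'R), hP, rfl⟩

end CoxeterSystem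

open CoxeterSystem

theorem bruhatLe_wordProd_of_sublist {P R : List B} (hPR : P <+ R) (hP : cs.IsReduced P)
    (hR : cs.IsReduced R) : BruhatLe cs (π P) (π R) := fun _ hR' hR'R =>
  cs.exists_reduced_sublist_of_reflTransGen (cs.reflTransGen_bruhatStep_of_sublist hPR hP hR)
    hR' hR'R

theorem exists_sublist_of_bruhatLe_wordProd_append_singleton {R : List B} {i : B} {u : W}
    (hRi : cs.IsReduced (R ++ [i])) (hu : BruhatLe cs u (π (R ++ [i]))) :
    ∃ P, P <+ R ∧ cs.IsReduced P ∧ (π P = u ∨ π P = u * s i ∧ ℓ (u * s i) < ℓ u) := by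
  obtain ⟨P, hPR, hP, rfl⟩ := hu _ hRi rfl
  obtain ⟨P₁, P₂, rfl, hP₁R, hP₂⟩ := sublist_append_iff.mp hPR
  have hP₁ : cs.IsReduced P₁ := by simpa using hP.take P₁.length
  refine ⟨P₁, hP₁R, hP₁, ?_⟩
  rcases sublist_singleton.mp hP₂ with rfl | rfl
  · simp
  · have h₁ := hP.eq
    have h₂ := hP₁.eq
    simp only [wordProd_append, wordProd_singleton, length_append, length_singleton] at h₁ ⊢
    rw [simple_mul_simple_cancel_right]
    exact Or.inr ⟨rfl, by omega⟩

section MulSimple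

variable {cs} {u w : W} {i : B}

theorem BruhatLe.le_mul_simple (hw : ℓ w < ℓ (w * s i)) (h : BruhatLe cs u w) :
    BruhatLe cs u (w * s i) := by
  obtain ⟨R, hR, rfl⟩ := cs.exists_isReduced w
  obtain ⟨P, hPR, hP, rfl⟩ := h R hR rfl
  rw [← wordProd_singleton, ← wordProd_append]
  exact bruhatLe_wordProd_of_sublist cs (hPR.trans (sublist_append_left R [i])) hP
    (hR.append_singleton hw)

theorem BruhatLe.mul_simple_mul_simple (hw : ℓ w < ℓ (w * s i)) (hu : ℓ u < ℓ (u * s i))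
    (h : BruhatLe cs u w) : BruhatLe cs (u * s i) (w * s i) := by
  obtain ⟨R, hR, rfl⟩ := cs.exists_isReduced w
  obtain ⟨P, hPR, hP, rfl⟩ := h R hR rfl
  rw [← wordProd_singleton, ← wordProd_append, ← wordProd_append]
  exact bruhatLe_wordProd_of_sublist cs (hPR.append (Sublist.refl [i]))
    (hP.append_singleton hu) (hR.append_singleton hw)

theorem BruhatLe.of_le_mul_simple (hw : ℓ w < ℓ (w * s i)) (hu : ℓ u < ℓ (u * s i))
    (h : BruhatLe cs u (w * s i)) : BruhatLe cs u w := by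
  obtain ⟨R, hR, rfl⟩ := cs.exists_isReduced w
  rw [← wordProd_singleton, ← wordProd_append] at h
  obtain ⟨P, hPR, hP, rfl | ⟨-, hlt⟩⟩ :=
    exists_sublist_of_bruhatLe_wordProd_append_singleton cs (hR.append_singleton hw) h
  · exact bruhatLe_wordProd_of_sublist cs hPR hP hR
  · omega

theorem BruhatLe.mul_simple_of_le_mul_simple (hw : ℓ w < ℓ (w * s i))
    (hu : ℓ (u * s i) < ℓ u) (h : BruhatLe cs u (w * s i)) : BruhatLe cs (u * s i) w := by
  obtain ⟨R, hR, rfl⟩ := cs.exists_isReduced w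
  rw [← wordProd_singleton, ← wordProd_append] at h
  obtain ⟨P, hPR, hP, rfl | ⟨hπ, -⟩⟩ :=
    exists_sublist_of_bruhatLe_wordProd_append_singleton cs (hR.append_singleton hw) h
  · obtain ⟨P', hP'P, hlen, hπ⟩ :=
      IsRightInversion.exists_sublist_wordProd_eq (cs := cs) ⟨cs.isReflection_simple i, hu⟩
    have hP' : cs.IsReduced P' := by
      have := hP.eq
      have := cs.length_mul_simple (π P) i
      rw [CoxeterSystem.IsReduced, ← hπ]
      omega
    rw [hπ]
    exact bruhatLe_wordProd_of_sublist cs (hP'P.trans hPR) hP' hR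
  · rw [← hπ]
    exact bruhatLe_wordProd_of_sublist cs hPR hP hR

end MulSimple

theorem dem_eq_wordProd {Q : List B} (hQ : cs.IsReduced Q) : Dem cs Q = π Q := by
  induction Q using reverseRecOn with
  | nil => rfl
  | append_singleton Q b ih =>
    have hQ' : cs.IsReduced Q := by simpa using hQ.take Q.length
    rw [Dem, foldl_append, ← Dem, ih hQ']
    simp [hQ.length_lt_length_mul_simple, wordProd_append]

theorem length_smask_le (Q : List B) (F : Finset ℕ) : (smask Q F).length ≤ F.card := by
  set L := (Q.zipIdx.map Prod.swap).filter fun p => p.1 ∈ F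
  have hnodup : (L.map Prod.fst).Nodup := by
    refine (filter_sublist.map Prod.fst).nodup ?_
    simpa [List.map_map, Function.comp_def] using nodup_zipIdx_map_snd Q
  have hsub : L.map Prod.fst ⊆ F.toList := fun j hj => by
    obtain ⟨p, hp, rfl⟩ := mem_map.mp hj
    simpa [L] using (mem_filter.mp hp).2
  simpa [smask, L] using (hnodup.subperm hsub).length_le

theorem smask_insert {Q₁ Q₂ : List B} {c : B} {S : Finset ℕ} (hS : ∀ j ∈ S, Q₁.length < j) :
    smask (Q₁ ++ c :: Q₂) (insert Q₁.length S) = c :: smask (Q₁ ++ c :: Q₂) S := by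
  have hpS : Q₁.length ∉ S := fun h => lt_irrefl _ (hS _ h)
  have hQ₁ : ∀ F : Finset ℕ, (∀ j ∈ F, Q₁.length ≤ j) →
      (Q₁.zipIdx.map Prod.swap).filter (fun p => p.1 ∈ F) = [] := by
    refine fun F hF => filter_eq_nil_iff.mpr ?_
    simp only [mem_map, forall_exists_index, and_imp, decide_eq_true_eq]
    rintro _ ⟨x, i⟩ h rfl hi
    have := (mem_zipIdx h).2.1
    have := hF i hi
    simp only [zero_add] at *
    omega
  have hQ₂ : ((Q₂.zipIdx (Q₁.length + 1)).map Prod.swap).filter (fun p => p.1 ∈ insert Q₁.length S)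
      = ((Q₂.zipIdx (Q₁.length + 1)).map Prod.swap).filter (fun p => p.1 ∈ S) := by
    refine filter_congr fun p hp => ?_
    simp only [mem_map] at hp
    obtain ⟨⟨x, i⟩, h, rfl⟩ := hp
    have := (mem_zipIdx h).1
    simp only [Prod.swap_prod_mk, Finset.mem_insert, decide_eq_decide, or_iff_right_iff_imp]
    omega
  rw [smask, smask, zipIdx_append, zipIdx_cons, map_append, map_cons, filter_append, filter_append,
    hQ₁ _ (Finset.forall_mem_insert .. |>.mpr ⟨le_rfl, fun j hj => (hS j hj).le⟩),
    hQ₁ _ (fun j hj => (hS j hj).le), filter_cons, filter_cons, zero_add, hQ₂]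
  simp [hpS]

theorem smask_eq_cons_erase {Q₁ Q₂ : List B} {c : B} {S : Finset ℕ} (hp : Q₁.length ∈ S)
    (hS : ∀ j ∈ S, Q₁.length ≤ j) :
    smask (Q₁ ++ c :: Q₂) S = c :: smask (Q₁ ++ c :: Q₂) (S.erase Q₁.length) := by
  conv_lhs => rw [← Finset.insert_erase hp]
  exact smask_insert fun j hj =>
    lt_of_le_of_ne (hS j (Finset.mem_of_mem_erase hj)) (Finset.ne_of_mem_erase hj).symm

/-- The map `C_{i-1} → C_i` of the theorem, where `p = i - 1` is the `0`-indexed position of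
`r_α = s a` in the word. -/
def csetMap (p : ℕ) (a : B) (x : W × Finset ℕ) : W × Finset ℕ :=
  if p ∈ x.2 then (x.1 * s a, x.2.erase p) else x

section Cset

variable {cs} {Q₁ Q₂ : List B} {a : B} {w : W} {x y : W × Finset ℕ}

theorem dem_take_length (hQ : cs.IsReduced (Q₁ ++ [a])) :
    Dem cs ((Q₁ ++ a :: Q₂).take Q₁.length) = π Q₁ := by
  rw [take_left]
  exact dem_eq_wordProd cs (by simpa using hQ.take Q₁.length)

theorem dem_take_length_add_one (hQ : cs.IsReduced (Q₁ ++ [a])) :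
    Dem cs ((Q₁ ++ a :: Q₂).take (Q₁.length + 1)) = π Q₁ * s a := by
  rw [← wordProd_singleton, ← wordProd_append, ← dem_eq_wordProd cs hQ]
  simp [take_append, take_of_length_le]

theorem length_lt_length_mul_simple_of_mem_Cset (hx : x ∈ Cset cs (Q₁ ++ a :: Q₂) w Q₁.length)
    (hp : Q₁.length ∈ x.2) : ℓ x.1 < ℓ (x.1 * s a) := by
  obtain ⟨-, hrange, hlen, hprod⟩ := hx
  have hsmask := length_smask_le (Q₁ ++ a :: Q₂) (x.2.erase Q₁.length)
  have hcard := Finset.card_erase_add_one hp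
  have hw : ℓ w ≤ ℓ (x.1 * s a) + ℓ (π (smask (Q₁ ++ a :: Q₂) (x.2.erase Q₁.length))) := by
    rw [← hprod, smask_eq_cons_erase hp fun j hj => (hrange j hj).1, wordProd_cons, ← mul_assoc]
    exact cs.length_mul_le _ _
  have := cs.length_wordProd_le (smask (Q₁ ++ a :: Q₂) (x.2.erase Q₁.length))
  have := cs.length_mul_simple x.1 a
  omega

theorem csetMap_mem_Cset (hQ : cs.IsReduced (Q₁ ++ [a]))
    (hx : x ∈ Cset cs (Q₁ ++ a :: Q₂) w Q₁.length) :
    csetMap cs Q₁.length a x ∈ Cset cs (Q₁ ++ a :: Q₂) w (Q₁.length + 1) := by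
  obtain ⟨hle, hrange, hlen, hprod⟩ := id hx
  rw [dem_take_length hQ] at hle
  have hw := hQ.length_lt_length_mul_simple
  unfold csetMap
  split_ifs with hp
  · have hup := length_lt_length_mul_simple_of_mem_Cset hx hp
    refine ⟨?_, fun j hj => ?_, ?_, ?_⟩
    · rw [dem_take_length_add_one hQ]
      exact hle.mul_simple_mul_simple hw hup
    · have hj' := hrange j (Finset.mem_of_mem_erase hj)
      have := Finset.ne_of_mem_erase hj
      exact ⟨by omega, hj'.2⟩
    · have := Finset.card_erase_add_one hp
      have := cs.length_mul_simple x.1 a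
      dsimp only
      omega
    · rw [mul_assoc, ← wordProd_cons, ← smask_eq_cons_erase hp fun j hj => (hrange j hj).1]
      exact hprod
  · refine ⟨?_, fun j hj => ?_, hlen, hprod⟩
    · rw [dem_take_length_add_one hQ]
      exact hle.le_mul_simple hw
    · have hj' := hrange j hj
      have : j ≠ Q₁.length := ne_of_mem_of_not_mem hj hp
      exact ⟨by omega, hj'.2⟩

theorem mem_Cset_and_csetMap_eq_iff (hQ : cs.IsReduced (Q₁ ++ [a]))
    (hy : y ∈ Cset cs (Q₁ ++ a :: Q₂) w (Q₁.length + 1)) :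
    (x ∈ Cset cs (Q₁ ++ a :: Q₂) w Q₁.length ∧ csetMap cs Q₁.length a x = y) ↔
      (x = y ∧ BruhatLe cs y.1 (π Q₁)) ∨
        (x = (y.1 * s a, insert Q₁.length y.2) ∧ ℓ (y.1 * s a) < ℓ y.1) := by
  obtain ⟨hle, hrange, hlen, hprod⟩ := id hy
  rw [dem_take_length_add_one hQ] at hle
  have hpy : ∀ j ∈ y.2, Q₁.length < j := fun j hj => (hrange j hj).1
  have hp : Q₁.length ∉ y.2 := fun h => lt_irrefl _ (hpy _ h)
  constructor
  · rintro ⟨hx, rfl⟩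
    unfold csetMap
    split_ifs with hpx
    · refine Or.inr ⟨?_, ?_⟩
      · simp [Finset.insert_erase hpx]
      · simpa using length_lt_length_mul_simple_of_mem_Cset hx hpx
    · exact Or.inl ⟨rfl, dem_take_length hQ ▸ hx.1⟩
  · rintro (⟨rfl, hle₀⟩ | ⟨rfl, hdown⟩)
    · refine ⟨⟨?_, fun j hj => ⟨(hpy j hj).le, (hrange j hj).2⟩, hlen, hprod⟩, if_neg hp⟩
      rwa [dem_take_length hQ]
    refine ⟨⟨?_, fun j hj => ?_, ?_, ?_⟩, ?_⟩
    · rw [dem_take_length hQ]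
      exact hle.mul_simple_of_le_mul_simple hQ.length_lt_length_mul_simple hdown
    · rcases Finset.mem_insert.mp hj with rfl | hj
      · simp
      · exact ⟨(hpy j hj).le, (hrange j hj).2⟩
    · have := cs.length_mul_simple y.1 a
      rw [Finset.card_insert_of_notMem hp]
      dsimp only
      omega
    · rw [smask_insert hpy, wordProd_cons, mul_assoc, simple_mul_simple_cancel_left]
      exact hprod
    · simp [csetMap, Finset.erase_insert hp]

theorem bruhatLe_of_mem_Cset_succ (hQ : cs.IsReduced (Q₁ ++ [a]))
    (hy : y ∈ Cset cs (Q₁ ++ a :: Q₂) w (Q₁.length + 1)) (hup : ℓ y.1 < ℓ (y.1 * s a)) :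
    BruhatLe cs y.1 (π Q₁) :=
  (dem_take_length_add_one hQ ▸ hy.1).of_le_mul_simple hQ.length_lt_length_mul_simple hup

end Cset

end

theorem cset_surjection (Q₁ Q₂ : List B) (a : B) (w : W)
    (hred : cs.IsReduced (Q₁ ++ a :: Q₂)) :
    let Q := Q₁ ++ a :: Q₂
    let p := Q₁.length
    let φ : W × Finset ℕ → W × Finset ℕ :=
      fun x => if p ∈ x.2 then (x.1 * cs.simple a, x.2.erase p) else x
    -- well-defined
    (∀ x ∈ Cset cs Q w p, φ x ∈ Cset cs Q w (p + 1)) ∧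
    -- surjective
    (∀ y ∈ Cset cs Q w (p + 1), ∃ x ∈ Cset cs Q w p, φ x = y) ∧
    -- fibers
    (∀ y ∈ Cset cs Q w (p + 1),
      -- case (1): `y.1 * sₐ > y.1`
      (cs.length y.1 < cs.length (y.1 * cs.simple a) →
        ∀ x, (x ∈ Cset cs Q w p ∧ φ x = y) ↔ x = y) ∧
      -- case (2): `y.1 * sₐ < y.1` and `y.1 ≰ v_{i-1}`
      (cs.length (y.1 * cs.simple a) < cs.length y.1 →
        ¬ BruhatLe cs y.1 (Dem cs Q₁) →
        ∀ x, (x ∈ Cset cs Q w p ∧ φ x = y) ↔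
          x = (y.1 * cs.simple a, insert p y.2)) ∧
      -- case (3): `y.1 * sₐ < y.1 ≤ v_{i-1}`
      (cs.length (y.1 * cs.simple a) < cs.length y.1 →
        BruhatLe cs y.1 (Dem cs Q₁) →
        ∀ x, (x ∈ Cset cs Q w p ∧ φ x = y) ↔
          (x = y ∨ x = (y.1 * cs.simple a, insert p y.2)))) := by
  intro Q p φ
  have hQ : cs.IsReduced (Q₁ ++ [a]) := by
    simpa [take_append, take_of_length_le] using hred.take (Q₁.length + 1)
  have hdem : Dem cs Q₁ = cs.wordProd Q₁ :=
    dem_eq_wordProd cs (by simpa using hred.take Q₁.length)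
  have hfiber := fun y (hy : y ∈ Cset cs Q w (p + 1)) x =>
    mem_Cset_and_csetMap_eq_iff (x := x) hQ hy
  refine ⟨fun x hx => csetMap_mem_Cset hQ hx, fun y hy => ?_, fun y hy =>
    ⟨fun hup x => (hfiber y hy x).trans ?_, fun hdown hnle x => (hfiber y hy x).trans ?_,
      fun hdown hle x => (hfiber y hy x).trans ?_⟩⟩
  · rcases cs.length_mul_simple y.1 a with hup | hdown
    · exact ⟨y, (hfiber y hy y).2 (Or.inl ⟨rfl, bruhatLe_of_mem_Cset_succ hQ hy (by omega)⟩)⟩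
    · exact ⟨_, (hfiber y hy _).2 (Or.inr ⟨rfl, by omega⟩)⟩
  · simp [bruhatLe_of_mem_Cset_succ hQ hy hup, hup.not_gt]
  · simp [← hdem, hnle, hdown, p]
  · simp [← hdem, hle, hdown, p]
end
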